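/- Let X be a compact metric space and φ : X → X a CSLI map. Then there exists a strictly positive cocycle for φ (i.e., a cocycle ω with ω(x) > 0 for all x ∈ X) if and only if φ is a local homeomorphism. -/

import Mathlib

/-!
If `ω > 0` is a cocycle, `φ` is open at every `x`: otherwise points `y'` arbitrarily close to
`y = φ x` have no preimage near `x`, so (`φ` being closed) their preimages lie injectively near the
other points `z` of `φ⁻¹{y}`, where `ω < ω z + ε`; the fiber sum at `y'` is then at most
`1 - ω x + #(φ⁻¹{y} \ {x}) ε < 1`. An open, continuous, locally injective map is a local
homeomorphism. Conversely, for a local homeomorphism of a compact Hausdorff space the fiber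
cardinality is finite, positive and locally constant, so `x ↦ 1 / #φ⁻¹{φ x}` is a strictly positive
cocycle.
-/

/-- A map is locally injective if every point has a neighborhood on which
the map is injective. -/
def LocallyInjective {X : Type*} [TopologicalSpace X] (φ : X → X) : Prop :=
  ∀ x : X, ∃ U ∈ nhds x, Set.InjOn φ U

/-- A map of a topological space to itself is CSLI if it is continuous,
surjective and locally injective. -/
def CSLI {X : Type*} [TopologicalSpace X] (φ : X → X) : Prop :=
  Continuous φ ∧ Function.Surjective φ ∧ LocallyInjective φ

/-- A cocycle for a map `φ : X → X` is a continuous nonnegative real function `ω`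
such that the sum of `ω` over each fiber of `φ` equals `1`. -/
def IsCocycle {X : Type*} [TopologicalSpace X] (φ : X → X) (ω : X → ℝ) : Prop :=
  Continuous ω ∧ (∀ x : X, 0 ≤ ω x) ∧ ∀ y : X, ∑ᶠ x ∈ φ ⁻¹' {y}, ω x = 1

/-- `φ` is locally open at `x` if there is an open neighborhood `N` of `x` such that
the restriction of `φ` to `N` is an open map of `N` into `X`. -/
def LocallyOpenAt {X : Type*} [TopologicalSpace X] (φ : X → X) (x : X) : Prop :=
  ∃ N : Set X, IsOpen N ∧ x ∈ N ∧ ∀ O ⊆ N, IsOpen O → IsOpen (φ '' O)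

open Set Filter Topology

theorem finsum_mem_le_finsum_mem_of_injOn {α β M : Type*} [AddCommMonoid M] [PartialOrder M]
    [IsOrderedAddMonoid M] {s : Set α} {t : Set β} {f : α → M} {g : β → M} {i : α → β}
    (ht : t.Finite) (hmaps : MapsTo i s t) (hi : InjOn i s) (hfg : ∀ p ∈ s, f p ≤ g (i p))
    (hg : ∀ z ∈ t, 0 ≤ g z) : ∑ᶠ p ∈ s, f p ≤ ∑ᶠ z ∈ t, g z := by
  classical
  have hs : s.Finite := (ht.subset (image_subset_iff.2 hmaps)).of_finite_image hi
  rw [finsum_mem_eq_finite_toFinset_sum _ hs, finsum_mem_eq_finite_toFinset_sum _ ht]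
  calc ∑ p ∈ hs.toFinset, f p
      ≤ ∑ p ∈ hs.toFinset, g (i p) := Finset.sum_le_sum fun p hp => hfg p (hs.mem_toFinset.1 hp)
    _ = ∑ z ∈ hs.toFinset.image i, g z :=
      (Finset.sum_image fun a ha b hb => hi (hs.mem_toFinset.1 ha) (hs.mem_toFinset.1 hb)).symm
    _ ≤ ∑ z ∈ ht.toFinset, g z :=
      Finset.sum_le_sum_of_subset_of_nonneg (by simpa using hmaps.image_subset)
        fun z hz _ => hg z (ht.mem_toFinset.1 hz)

theorem finsum_mem_const_of_finite {α M : Type*} [NonAssocSemiring M] {s : Set α}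
    (hs : s.Finite) (c : M) : ∑ᶠ _ ∈ s, c = s.ncard * c := by
  rw [finsum_mem_eq_finite_toFinset_sum _ hs, Finset.sum_const, nsmul_eq_mul,
    Set.ncard_eq_toFinset_card _ hs]

theorem IsOpenMap.isLocalHomeomorph {X Y : Type*} [TopologicalSpace X] [TopologicalSpace Y]
    {f : X → Y} (hopen : IsOpenMap f) (hc : Continuous f) (hinj : IsLocallyInjective f) :
    IsLocalHomeomorph f :=
  isLocalHomeomorph_iff_isOpenEmbedding_restrict.2 fun x =>
    let ⟨U, hU, hxU, hUinj⟩ := hinj x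
    ⟨U, hU.mem_nhds hxU, .of_continuous_injective_isOpenMap (hc.comp continuous_subtype_val)
      hUinj.injective (hopen.domRestrict hU)⟩

section

variable {X : Type*} [TopologicalSpace X] {φ : X → X}

theorem LocallyInjective.finite_preimage_singleton [CompactSpace X] [T1Space X]
    (hφc : Continuous φ) (hφ : LocallyInjective φ) (y : X) : (φ ⁻¹' {y}).Finite :=
  (isClosed_singleton.preimage hφc).isCompact.finite <| IsDiscrete.of_nhdsWithin fun z hz => by
    obtain ⟨U, hU, hUinj⟩ := hφ z
    refine le_pure_iff.2 (mem_of_superset (inter_mem_nhdsWithin _ hU) fun p hp => ?_)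
    exact hUinj hp.2 (mem_of_mem_nhds hU) (hp.1.trans hz.symm)

theorem eventually_exists_injOn_preimage_singleton [CompactSpace X] [T2Space X]
    (hφc : Continuous φ) {y : X} {N : X → Set X} (hN : ∀ z ∈ φ ⁻¹' {y}, N z ∈ 𝓝 z)
    (hNinj : ∀ z ∈ φ ⁻¹' {y}, InjOn φ (N z)) :
    ∀ᶠ y' in 𝓝 y, ∃ i : X → X, MapsTo i (φ ⁻¹' {y'}) (φ ⁻¹' {y}) ∧
      InjOn i (φ ⁻¹' {y'}) ∧ ∀ p ∈ φ ⁻¹' {y'}, p ∈ N (i p) := by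
  filter_upwards [hφc.isClosedMap.eventually_nhds_fiber (p := fun p => ∃ z ∈ φ ⁻¹' {y}, p ∈ N z)
    y fun z hz => mem_of_superset (hN z hz) fun p hp => ⟨z, hz, hp⟩] with y' hy'
  choose! i hi hpi using hy'
  exact ⟨i, hi, fun p hp q hq hpq => hNinj _ (hi p hp) (hpi p hp) (hpq ▸ hpi q hq)
    (hp.trans hq.symm), hpi⟩

theorem IsCocycle.isOpenMap_of_pos [CompactSpace X] [T2Space X] {ω : X → ℝ}
    (hω : IsCocycle φ ω) (hpos : ∀ x, 0 < ω x) (hφc : Continuous φ) (hφ : LocallyInjective φ) :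
    IsOpenMap φ := by
  classical
  refine IsOpenMap.of_nhds_le fun x => le_map fun V hV => ?_
  set F := φ ⁻¹' {φ x}
  have hF : F.Finite := hφ.finite_preimage_singleton hφc (φ x)
  set ε := ω x / ((F \ {x}).ncard + 1)
  have hε : 0 < ε := div_pos (hpos x) (by positivity)
  have hεlt : (F \ {x}).ncard * ε < ω x :=
    calc (F \ {x}).ncard * ε < ((F \ {x}).ncard + 1) * ε := by gcongr; exact lt_add_one _
      _ = ω x := mul_div_cancel₀ _ (by positivity)
  have hFsum : ∑ᶠ z ∈ F \ {x}, ω z = 1 - ω x := by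
    have hxF : x ∈ F := rfl
    rw [← hω.2.2 (φ x), ← finsum_mem_add_sdiff (singleton_subset_iff.2 hxF) hF,
      finsum_mem_singleton, add_sub_cancel_left]
  choose U hU hUinj using hφ
  let N z := U z ∩ ω ⁻¹' Iio (ω z + ε) ∩ (if z = x then V else univ)
  have hN : ∀ z, N z ∈ 𝓝 z := fun z => by
    refine inter_mem (inter_mem (hU z)
      (hω.1.continuousAt.preimage_mem_nhds (Iio_mem_nhds (lt_add_of_pos_right _ hε)))) ?_
    split_ifs with hzx
    exacts [hzx ▸ hV, univ_mem]
  filter_upwards [eventually_exists_injOn_preimage_singleton hφc (fun z _ => hN z)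
    fun z _ => (hUinj z).mono fun p hp => hp.1.1] with y' ⟨i, hmaps, hinj, hmem⟩
  by_contra hy'
  have hmapsB : MapsTo i (φ ⁻¹' {y'}) (F \ {x}) := fun p hp => by
    refine ⟨hmaps hp, fun hpx => hy' ⟨p, ?_, hp⟩⟩
    simpa [N, show i p = x from hpx] using (hmem p hp).2
  have hle : ∑ᶠ p ∈ φ ⁻¹' {y'}, ω p ≤ ∑ᶠ z ∈ F \ {x}, (ω z + ε) :=
    finsum_mem_le_finsum_mem_of_injOn hF.sdiff hmapsB hinj (fun p hp => (hmem p hp).1.2.le)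
      fun z _ => (add_pos (hpos z) hε).le
  rw [hω.2.2 y', finsum_mem_add_distrib hF.sdiff, hFsum, finsum_mem_const_of_finite hF.sdiff]
    at hle
  linarith

theorem IsLocalHomeomorph.locallyInjective (hloc : IsLocalHomeomorph φ) : LocallyInjective φ :=
  isLocallyInjective_iff_nhds.1 hloc.isLocallyInjective

theorem IsLocalHomeomorph.eventually_ncard_preimage_singleton_eq [CompactSpace X] [T2Space X]
    (hloc : IsLocalHomeomorph φ) (y : X) :
    ∀ᶠ y' in 𝓝 y, (φ ⁻¹' {y'}).ncard = (φ ⁻¹' {y}).ncard := by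
  have hF := hloc.locallyInjective.finite_preimage_singleton hloc.continuous y
  obtain ⟨U, hU, hUdisj⟩ := hF.t2_separation
  choose e hxe he using (hloc ·)
  let N z := U z ∩ (e z).source
  have hNopen : ∀ z, IsOpen (N z) := fun z => (hU z).2.inter (e z).open_source
  have hNmem : ∀ z, z ∈ N z := fun z => ⟨(hU z).1, hxe z⟩
  have hNinj : ∀ z, InjOn φ (N z) := fun z => by
    rw [he z]
    exact (e z).injOn.mono inter_subset_right
  filter_upwards [eventually_exists_injOn_preimage_singleton hloc.continuous
      (fun z _ => (hNopen z).mem_nhds (hNmem z)) fun z _ => hNinj z,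
    hF.eventually_all.2 fun z hz => (hloc.isOpenMap _ (hNopen z)).mem_nhds ⟨z, hNmem z, hz⟩]
    with y' ⟨i, hmaps, hinj, hmem⟩ hcover
  refine BijOn.ncard_eq ⟨hmaps, hinj, fun z hz => ?_⟩
  obtain ⟨p, hpN, hp⟩ := hcover z hz
  refine ⟨p, hp, by_contra fun hne => ?_⟩
  exact disjoint_left.1 (hUdisj (hmaps hp) hz hne) (hmem p hp).1 hpN.1

noncomputable def uniformFiberWeight (φ : X → X) (x : X) : ℝ := ((φ ⁻¹' {φ x}).ncard : ℝ)⁻¹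

theorem uniformFiberWeight_pos [CompactSpace X] [T1Space X] (hφc : Continuous φ)
    (hφ : LocallyInjective φ) (x : X) : 0 < uniformFiberWeight φ x :=
  inv_pos.2 <| Nat.cast_pos.2 <| (ncard_pos (hφ.finite_preimage_singleton hφc _)).2 ⟨x, rfl⟩

theorem IsLocalHomeomorph.isCocycle_uniformFiberWeight [CompactSpace X] [T2Space X]
    (hloc : IsLocalHomeomorph φ) (hsurj : Function.Surjective φ) :
    IsCocycle φ (uniformFiberWeight φ) := by
  refine ⟨continuous_iff_continuousAt.2 fun x => ?_, fun x => inv_nonneg.2 (Nat.cast_nonneg _),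
    fun y => ?_⟩
  · refine EventuallyEq.continuousAt (y := uniformFiberWeight φ x) ?_
    filter_upwards [hloc.continuous.continuousAt
      (hloc.eventually_ncard_preimage_singleton_eq (φ x))] with q hq
    rw [uniformFiberWeight, hq, uniformFiberWeight]
  · have hF := hloc.locallyInjective.finite_preimage_singleton hloc.continuous y
    have hcard : ((φ ⁻¹' {y}).ncard : ℝ) ≠ 0 :=
      Nat.cast_ne_zero.2 ((ncard_pos hF).2 (hsurj y)).ne'
    have hconst : ∀ x ∈ φ ⁻¹' {y}, uniformFiberWeight φ x = ((φ ⁻¹' {y}).ncard : ℝ)⁻¹ :=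
      fun x hx => by rw [uniformFiberWeight, mem_singleton_iff.1 hx]
    rw [finsum_mem_congr rfl hconst, finsum_mem_const_of_finite hF, mul_inv_cancel₀ hcard]

end

/-- A CSLI system admits a strictly positive cocycle if and only if the map is a
local homeomorphism. -/
theorem exists_pos_cocycle_iff_isLocalHomeomorph {X : Type*} [MetricSpace X]
    [CompactSpace X] (φ : X → X) (hφ : CSLI φ) :
    (∃ ω : X → ℝ, IsCocycle φ ω ∧ ∀ x : X, 0 < ω x) ↔ IsLocalHomeomorph φ := by
  obtain ⟨hφc, hsurj, hφinj⟩ := hφ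
  constructor
  · rintro ⟨ω, hω, hpos⟩
    exact (hω.isOpenMap_of_pos hpos hφc hφinj).isLocalHomeomorph hφc
      (isLocallyInjective_iff_nhds.2 hφinj)
  · intro hloc
    exact ⟨uniformFiberWeight φ, hloc.isCocycle_uniformFiberWeight hsurj,
      uniformFiberWeight_pos hφc hφinj⟩
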